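/- For four pairwise orthonormal vectors |φ₀⟩, |φ₁⟩, |ψ₀⟩, |ψ₁⟩ in ℂ²⊗H, summing over the Pauli operators U ∈ {I,X,Y,Z} acting on the first qubit: ∑_U (1/2)(|⟨φ₀|U|φ₁⟩ + ⟨ψ₁|U|ψ₀⟩|² + |⟨φ₀|U|ψ₀⟩ + ⟨ψ₁|U|φ₁⟩|²) ≤ 4. -/

import Mathlib

/-- Inner product ⟨φ|ψ⟩ (conjugate-linear in the first argument). -/
noncomputable def ip {α : Type*} [Fintype α] (φ ψ : α → ℂ) : ℂ :=
  ∑ x, (starRingEnd ℂ) (φ x) * ψ x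

/-- Entries of the Pauli matrices: `pmat 0` = I, `pmat 1` = X, `pmat 2` = Y, `pmat 3` = Z. -/
def pmat (u : Fin 4) (a b : Fin 2) : ℂ :=
  if u = 0 then (if a = b then 1 else 0)
  else if u = 1 then (if a = b then 0 else 1)
  else if u = 2 then
    (if a = 0 ∧ b = 1 then Complex.I else if a = 1 ∧ b = 0 then -Complex.I else 0)
  else (if a = b then (if a = 0 then 1 else -1) else 0)

/-- The Pauli operator `U ⊗ id` acting on the first qubit of ℂ²⊗H. -/
noncomputable def papply {H : Type*} (u : Fin 4) (ψ : Fin 2 × H → ℂ) : Fin 2 × H → ℂ :=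
  fun p => ∑ a : Fin 2, pmat u p.1 a * ψ (a, p.2)

lemma ip_expand {m : ℕ} (u : Fin 4) (A B : Fin 2 × Fin m → ℂ) :
    ip A (papply u B) =
      ∑ a : Fin 2, ∑ b : Fin 2, pmat u a b * ip (fun h => A (a, h)) (fun h => B (b, h)) := by
  simp only [ip, papply, Fintype.sum_prod_type, Finset.mul_sum, Finset.sum_mul]
  refine Finset.sum_congr rfl fun a _ => ?_
  rw [Finset.sum_comm]
  exact Finset.sum_congr rfl fun b _ => Finset.sum_congr rfl fun h _ => by ring

lemma pauli_sum (M : Fin 2 → Fin 2 → ℂ) :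
    ∑ u : Fin 4, Complex.normSq (∑ a : Fin 2, ∑ b : Fin 2, pmat u a b * M a b)
      = 2 * ∑ a : Fin 2, ∑ b : Fin 2, Complex.normSq (M a b) := by
  simp [Fin.sum_univ_four, Fin.sum_univ_two, pmat, Complex.normSq_apply,
    Complex.add_re, Complex.add_im, Complex.mul_re, Complex.mul_im,
    Complex.I_re, Complex.I_im]
  ring

lemma ip_cs {m : ℕ} (v w : Fin m → ℂ) :
    Complex.normSq (ip v w) ≤ (∑ h, Complex.normSq (v h)) * (∑ h, Complex.normSq (w h)) := by
  set V := (EuclideanSpace.equiv (Fin m) ℂ).symm v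
  set W := (EuclideanSpace.equiv (Fin m) ℂ).symm w
  have hinner : (inner ℂ V W : ℂ) = ip v w := by
    simp [PiLp.inner_apply, RCLike.inner_apply, ip, V, W, mul_comm]
  have hV : ‖V‖ ^ 2 = ∑ h, Complex.normSq (v h) := by
    rw [EuclideanSpace.norm_eq, Real.sq_sqrt (by positivity)]
    simp [Complex.sq_norm, V]
  have hW : ‖W‖ ^ 2 = ∑ h, Complex.normSq (w h) := by
    rw [EuclideanSpace.norm_eq, Real.sq_sqrt (by positivity)]
    simp [Complex.sq_norm, W]
  have h := norm_inner_le_norm (𝕜 := ℂ) V W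
  have h2 : ‖(inner ℂ V W : ℂ)‖ ^ 2 ≤ (‖V‖ * ‖W‖) ^ 2 :=
    pow_le_pow_left₀ (norm_nonneg _) h 2
  rw [hinner] at h2
  calc Complex.normSq (ip v w) = ‖ip v w‖ ^ 2 := by
        rw [Complex.sq_norm]
    _ ≤ (‖V‖ * ‖W‖) ^ 2 := h2
    _ = _ := by rw [mul_pow, hV, hW]

lemma ip_add_add {α : Type*} [Fintype α] (v v' w w' : α → ℂ) :
    ip (fun x => v x + v' x) (fun x => w x + w' x) =
      ip v w + ip v w' + ip v' w + ip v' w' := by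
  simp only [ip]
  rw [← Finset.sum_add_distrib, ← Finset.sum_add_distrib, ← Finset.sum_add_distrib]
  exact Finset.sum_congr rfl fun x _ => by simp [map_add]; ring

lemma ip_sub_sub {α : Type*} [Fintype α] (v v' w w' : α → ℂ) :
    ip (fun x => v x - v' x) (fun x => w x - w' x) =
      ip v w - ip v w' - ip v' w + ip v' w' := by
  simp only [ip]
  rw [sub_sub, ← Finset.sum_add_distrib, ← Finset.sum_sub_distrib, ← Finset.sum_add_distrib]
  exact Finset.sum_congr rfl fun x _ => by simp [map_sub]; ring

lemma normSq_par (p q : ℂ) :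
    Complex.normSq p + Complex.normSq q =
      (1/2) * (Complex.normSq (p + q) + Complex.normSq (p - q)) := by
  simp [Complex.normSq_apply, Complex.add_re, Complex.add_im, Complex.sub_re, Complex.sub_im]
  ring

/-- For four pairwise orthonormal vectors |φ₀⟩ = f 0, |φ₁⟩ = f 1, |ψ₀⟩ = f 2,
|ψ₁⟩ = f 3 in ℂ²⊗H, with the Paulis acting on the first qubit:
∑_U (1/2)(|⟨φ₀|U|φ₁⟩ + ⟨ψ₁|U|ψ₀⟩|² + |⟨φ₀|U|ψ₀⟩ + ⟨ψ₁|U|φ₁⟩|²) ≤ 4. -/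
theorem sum_pair_pauli_overlap_le_four {m : ℕ} (f : Fin 4 → Fin 2 × Fin m → ℂ)
    (hortho : ∀ i j, ip (f i) (f j) = if i = j then 1 else 0) :
    ∑ u : Fin 4, (1 / 2 : ℝ) *
        (Complex.normSq (ip (f 0) (papply u (f 1)) + ip (f 3) (papply u (f 2))) +
         Complex.normSq (ip (f 0) (papply u (f 2)) + ip (f 3) (papply u (f 1))))
      ≤ 4 := by
  set N : Fin 4 → Fin 4 → Fin 2 → Fin 2 → ℂ :=
    fun i j a b => ip (fun h => f i (a, h)) (fun h => f j (b, h)) with hN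
  -- norms of the f i
  have h1 : ∀ i, ∑ p, Complex.normSq (f i p) = 1 := by
    intro i
    have h := hortho i i
    rw [if_pos rfl] at h
    have : (((∑ p, Complex.normSq (f i p)) : ℝ) : ℂ) = 1 := by
      rw [← h]
      push_cast
      exact Finset.sum_congr rfl fun p _ => by
        rw [Complex.normSq_eq_conj_mul_self]
    exact_mod_cast this
  have hz : ∀ i j, i ≠ j → (∑ p, f i p * (starRingEnd ℂ) (f j p)).re = 0 := by
    intro i j hij
    have : (∑ p, f i p * (starRingEnd ℂ) (f j p)) = (starRingEnd ℂ) (ip (f i) (f j)) := by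
      simp [ip, map_sum]
    rw [this, hortho i j, if_neg hij]
    simp
  have hadd : ∀ i j, i ≠ j → ∑ p, Complex.normSq (f i p + f j p) = 2 := by
    intro i j hij
    calc ∑ p, Complex.normSq (f i p + f j p)
        = ∑ p, (Complex.normSq (f i p) + Complex.normSq (f j p)
            + 2 * (f i p * (starRingEnd ℂ) (f j p)).re) :=
          Finset.sum_congr rfl fun p _ => Complex.normSq_add _ _
      _ = (∑ p, Complex.normSq (f i p)) + (∑ p, Complex.normSq (f j p))
            + 2 * (∑ p, f i p * (starRingEnd ℂ) (f j p)).re := by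
          rw [Finset.sum_add_distrib, Finset.sum_add_distrib, ← Finset.mul_sum,
            Complex.re_sum]
      _ = 2 := by rw [h1 i, h1 j, hz i j hij]; ring
  have hsub : ∀ i j, i ≠ j → ∑ p, Complex.normSq (f i p - f j p) = 2 := by
    intro i j hij
    calc ∑ p, Complex.normSq (f i p - f j p)
        = ∑ p, (Complex.normSq (f i p) + Complex.normSq (f j p)
            - 2 * (f i p * (starRingEnd ℂ) (f j p)).re) :=
          Finset.sum_congr rfl fun p _ => Complex.normSq_sub _ _
      _ = (∑ p, Complex.normSq (f i p)) + (∑ p, Complex.normSq (f j p))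
            - 2 * (∑ p, f i p * (starRingEnd ℂ) (f j p)).re := by
          rw [Finset.sum_sub_distrib, Finset.sum_add_distrib, ← Finset.mul_sum,
            Complex.re_sum]
      _ = 2 := by rw [h1 i, h1 j, hz i j hij]; ring
  -- combine the two overlaps into a single Pauli sum
  have step1 : ∀ (u : Fin 4) (i j k l : Fin 4),
      ip (f i) (papply u (f j)) + ip (f k) (papply u (f l)) =
        ∑ a : Fin 2, ∑ b : Fin 2, pmat u a b * (N i j a b + N k l a b) := by
    intro u i j k l
    rw [ip_expand, ip_expand, ← Finset.sum_add_distrib]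
    refine Finset.sum_congr rfl fun a _ => ?_
    rw [← Finset.sum_add_distrib]
    exact Finset.sum_congr rfl fun b _ => (mul_add _ _ _).symm
  set P : Fin 2 → Fin 2 → ℂ := fun a b => N 0 1 a b + N 3 2 a b with hP
  set Q : Fin 2 → Fin 2 → ℂ := fun a b => N 0 2 a b + N 3 1 a b with hQ
  have main : ∑ u : Fin 4, (1 / 2 : ℝ) *
        (Complex.normSq (ip (f 0) (papply u (f 1)) + ip (f 3) (papply u (f 2))) +
         Complex.normSq (ip (f 0) (papply u (f 2)) + ip (f 3) (papply u (f 1))))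
      = (∑ a : Fin 2, ∑ b : Fin 2, Complex.normSq (P a b))
        + (∑ a : Fin 2, ∑ b : Fin 2, Complex.normSq (Q a b)) := by
    calc ∑ u : Fin 4, (1 / 2 : ℝ) *
          (Complex.normSq (ip (f 0) (papply u (f 1)) + ip (f 3) (papply u (f 2))) +
           Complex.normSq (ip (f 0) (papply u (f 2)) + ip (f 3) (papply u (f 1))))
        = ∑ u : Fin 4, (1 / 2 : ℝ) *
            (Complex.normSq (∑ a : Fin 2, ∑ b : Fin 2, pmat u a b * P a b) +
             Complex.normSq (∑ a : Fin 2, ∑ b : Fin 2, pmat u a b * Q a b)) := by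
          refine Finset.sum_congr rfl fun u _ => ?_
          rw [step1 u 0 1 3 2, step1 u 0 2 3 1]
      _ = (1 / 2 : ℝ) *
            ((∑ u : Fin 4, Complex.normSq (∑ a : Fin 2, ∑ b : Fin 2, pmat u a b * P a b))
            + (∑ u : Fin 4, Complex.normSq (∑ a : Fin 2, ∑ b : Fin 2, pmat u a b * Q a b))) := by
          rw [← Finset.mul_sum, Finset.sum_add_distrib]
      _ = (1 / 2 : ℝ) *
            (2 * (∑ a : Fin 2, ∑ b : Fin 2, Complex.normSq (P a b))
            + 2 * (∑ a : Fin 2, ∑ b : Fin 2, Complex.normSq (Q a b))) := by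
          rw [pauli_sum, pauli_sum]
      _ = _ := by ring
  rw [main]
  -- parallelogram
  have par : (∑ a : Fin 2, ∑ b : Fin 2, Complex.normSq (P a b))
        + (∑ a : Fin 2, ∑ b : Fin 2, Complex.normSq (Q a b))
      = (1/2) * ∑ a : Fin 2, ∑ b : Fin 2,
          (Complex.normSq (P a b + Q a b) + Complex.normSq (P a b - Q a b)) := by
    rw [Finset.mul_sum, ← Finset.sum_add_distrib]
    refine Finset.sum_congr rfl fun a _ => ?_
    rw [Finset.mul_sum, ← Finset.sum_add_distrib]
    exact Finset.sum_congr rfl fun b _ => normSq_par _ _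
  rw [par]
  -- identify P ± Q as inner products of sums/differences
  have hPQadd : ∀ a b, P a b + Q a b =
      ip (fun h => f 0 (a, h) + f 3 (a, h)) (fun h => f 1 (b, h) + f 2 (b, h)) := by
    intro a b
    rw [ip_add_add]
    simp only [hP, hQ, hN]
    ring
  have hPQsub : ∀ a b, P a b - Q a b =
      ip (fun h => f 0 (a, h) - f 3 (a, h)) (fun h => f 1 (b, h) - f 2 (b, h)) := by
    intro a b
    rw [ip_sub_sub]
    simp only [hP, hQ, hN]
    ring
  -- Cauchy–Schwarz bound
  have bound : ∑ a : Fin 2, ∑ b : Fin 2,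
      (Complex.normSq (P a b + Q a b) + Complex.normSq (P a b - Q a b))
      ≤ ∑ a : Fin 2, ∑ b : Fin 2,
          ((∑ h, Complex.normSq (f 0 (a, h) + f 3 (a, h)))
              * (∑ h, Complex.normSq (f 1 (b, h) + f 2 (b, h)))
           + (∑ h, Complex.normSq (f 0 (a, h) - f 3 (a, h)))
              * (∑ h, Complex.normSq (f 1 (b, h) - f 2 (b, h)))) := by
    refine Finset.sum_le_sum fun a _ => Finset.sum_le_sum fun b _ => ?_
    rw [hPQadd a b, hPQsub a b]
    exact add_le_add (ip_cs _ _) (ip_cs _ _)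
  have rhs_eval : ∑ a : Fin 2, ∑ b : Fin 2,
          ((∑ h, Complex.normSq (f 0 (a, h) + (f 3) (a, h)))
              * (∑ h, Complex.normSq (f 1 (b, h) + f 2 (b, h)))
           + (∑ h, Complex.normSq (f 0 (a, h) - f 3 (a, h)))
              * (∑ h, Complex.normSq (f 1 (b, h) - f 2 (b, h)))) = 8 := by
    have e1 : ∑ a : Fin 2, ∑ h, Complex.normSq (f 0 (a, h) + f 3 (a, h)) = 2 := by
      have := hadd 0 3 (by decide)
      rwa [Fintype.sum_prod_type] at this
    have e2 : ∑ b : Fin 2, ∑ h, Complex.normSq (f 1 (b, h) + f 2 (b, h)) = 2 := by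
      have := hadd 1 2 (by decide)
      rwa [Fintype.sum_prod_type] at this
    have e3 : ∑ a : Fin 2, ∑ h, Complex.normSq (f 0 (a, h) - f 3 (a, h)) = 2 := by
      have := hsub 0 3 (by decide)
      rwa [Fintype.sum_prod_type] at this
    have e4 : ∑ b : Fin 2, ∑ h, Complex.normSq (f 1 (b, h) - f 2 (b, h)) = 2 := by
      have := hsub 1 2 (by decide)
      rwa [Fintype.sum_prod_type] at this
    calc ∑ a : Fin 2, ∑ b : Fin 2, _
        = (∑ a : Fin 2, ∑ h, Complex.normSq (f 0 (a, h) + f 3 (a, h)))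
            * (∑ b : Fin 2, ∑ h, Complex.normSq (f 1 (b, h) + f 2 (b, h)))
          + (∑ a : Fin 2, ∑ h, Complex.normSq (f 0 (a, h) - f 3 (a, h)))
            * (∑ b : Fin 2, ∑ h, Complex.normSq (f 1 (b, h) - f 2 (b, h))) := by
          rw [Finset.sum_mul_sum, Finset.sum_mul_sum, ← Finset.sum_add_distrib]
          exact Finset.sum_congr rfl fun a _ => by rw [← Finset.sum_add_distrib]
      _ = 8 := by rw [e1, e2, e3, e4]; norm_num
  calc (1/2 : ℝ) * ∑ a : Fin 2, ∑ b : Fin 2,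
          (Complex.normSq (P a b + Q a b) + Complex.normSq (P a b - Q a b))
      ≤ (1/2 : ℝ) * 8 := by
        apply mul_le_mul_of_nonneg_left _ (by norm_num)
        rw [← rhs_eval]
        exact bound
    _ = 4 := by norm_num
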